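/- arXiv:1304.1827 — 3 statements merged into one kernel-verified Lean document; each statement's English description precedes it below -/
import Mathlib

section
/- For every ground DFLP^FA program Π, any two distinct fuzzy answer sets I₁ and I₂ of Π are incomparable under the pointwise order: neither I₁ ≤ I₂ nor I₂ ≤ I₁ holds. -/
open scoped Classical

noncomputable section

/-- Grade membership values: elements of the unit interval [0,1]. -/
abbrev Grade := unitInterval

/-- An element ⟨X:U | C⟩ of a ground fuzzy set: a real term X, a grade U,
and a finite conjunction C of fuzzy annotated atoms. -/
structure FuzzyPair (Atom : Type) where
  term : ℝ
  grade : Grade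
  conj : List (Atom × Grade)

/-- A ground fuzzy set: a set of pairs ⟨X:U | C⟩. -/
abbrev GroundFuzzySet (Atom : Type) := Finset (FuzzyPair Atom)

/-- Fuzzy aggregate function symbols. -/
inductive AggFun
  | sumF | timesF | minF | maxF | countF

/-- Comparison operators for aggregate atoms. -/
inductive CmpOp
  | eq | ne | lt | gt | le | ge

def CmpOp.apply : CmpOp → ℝ → ℝ → Prop
  | .eq, x, t => x = t
  | .ne, x, t => x ≠ t
  | .lt, x, t => x < t
  | .gt, x, t => x > t
  | .le, x, t => x ≤ t
  | .ge, x, t => x ≥ t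

/-- A conjunction of fuzzy annotated atoms is true w.r.t. I iff every a:μ in it has μ ≤ I(a). -/
def conjTrue {Atom : Type} (I : Atom → Grade) (C : List (Atom × Grade)) : Prop :=
  ∀ p ∈ C, p.2 ≤ I p.1

/-- S_I : the multiset {{ X:U | ⟨X:U | C⟩ ∈ S and C is true w.r.t. I }}. -/
def fuzzySetEval {Atom : Type} (I : Atom → Grade) (S : GroundFuzzySet Atom) :
    Multiset (ℝ × Grade) :=
  (S.val.filter (fun p => conjTrue I p.conj)).map (fun p => (p.term, p.grade))

/-- Minimum of the grade (second) components of a multiset; 1 on the empty multiset. -/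
def minGrade (M : Multiset (ℝ × Grade)) : Grade :=
  (M.map Prod.snd).fold min 1

/-- Evaluation of a fuzzy aggregate on a multiset; `none` represents ⊥ (undefined). -/
def aggEval : AggFun → Multiset (ℝ × Grade) → Option (ℝ × Grade)
  | .sumF, M => some ((M.map Prod.fst).sum, minGrade M)
  | .timesF, M => some ((M.map Prod.fst).prod, minGrade M)
  | .minF, M => if M = 0 then none else some (sInf {x | x ∈ M.map Prod.fst}, minGrade M)
  | .maxF, M => if M = 0 then none else some (sSup {x | x ∈ M.map Prod.fst}, minGrade M)
  | .countF, M => some ((Multiset.card M : ℝ), minGrade M)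

/-- A body element: an atom or a ground fuzzy aggregate atom f(S) ≺ T. -/
inductive BodyAtom (Atom : Type)
  | atom (a : Atom)
  | agg (f : AggFun) (S : GroundFuzzySet Atom) (op : CmpOp) (T : ℝ)

/-- A body literal: a possibly negated annotated body atom. -/
structure BodyLit (Atom : Type) where
  neg : Bool
  batom : BodyAtom Atom
  grade : Grade

/-- A ground DFLP^FA rule: annotated head disjuncts and a body of literals. -/
structure Rule (Atom : Type) where
  head : List (Atom × Grade)
  body : List (BodyLit Atom)

/-- Satisfaction of an annotated (non-negated) body atom. -/
def satBodyAtom {Atom : Type} (I : Atom → Grade) : BodyAtom Atom → Grade → Prop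
  | .atom a, μ => μ ≤ I a
  | .agg f S op T, μ =>
      ∃ x ν, aggEval f (fuzzySetEval I S) = some (x, ν) ∧ CmpOp.apply op x T ∧ μ ≤ ν

/-- Satisfaction of a body literal (negation is failure of satisfaction). -/
def satLit {Atom : Type} (I : Atom → Grade) (l : BodyLit Atom) : Prop :=
  if l.neg then ¬ satBodyAtom I l.batom l.grade else satBodyAtom I l.batom l.grade

def satBody {Atom : Type} (I : Atom → Grade) (r : Rule Atom) : Prop :=
  ∀ l ∈ r.body, satLit I l

def satHead {Atom : Type} (I : Atom → Grade) (r : Rule Atom) : Prop :=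
  ∃ h ∈ r.head, h.2 ≤ I h.1

def satRule {Atom : Type} (I : Atom → Grade) (r : Rule Atom) : Prop :=
  satBody I r → satHead I r

/-- I is a fuzzy model of Π: I satisfies every rule and, for every atom a,
max{{ μ | some rule r ∈ Π has I satisfying body(r) and a:μ a head disjunct satisfied by I }} ≤ I(a). -/
def isFuzzyModel {Atom : Type} (I : Atom → Grade) (P : Set (Rule Atom)) : Prop :=
  (∀ r ∈ P, satRule I r) ∧
  ∀ a μ, (∃ r ∈ P, satBody I r ∧ (a, μ) ∈ r.head ∧ μ ≤ I a) → μ ≤ I a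

/-- ≤-minimal fuzzy model: no fuzzy model I' with I' < I (pointwise I' ≤ I and I' ≠ I). -/
def isMinimalFuzzyModel {Atom : Type} (I : Atom → Grade) (P : Set (Rule Atom)) : Prop :=
  isFuzzyModel I P ∧ ¬ ∃ I' : Atom → Grade, isFuzzyModel I' P ∧ I' ≤ I ∧ I' ≠ I

/-- The fuzzy reduct Π^I = { r ∈ Π | I satisfies body(r) }. -/
def fuzzyReduct {Atom : Type} (P : Set (Rule Atom)) (I : Atom → Grade) : Set (Rule Atom) :=
  {r ∈ P | satBody I r}

/-- I is a fuzzy answer set of Π iff I is a ≤-minimal fuzzy model of Π^I. -/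
def isFuzzyAnswerSet {Atom : Type} (I : Atom → Grade) (P : Set (Rule Atom)) : Prop :=
  isMinimalFuzzyModel I (fuzzyReduct P I)

end

lemma answerSet_model_of_any_reduct {Atom : Type} (P : Set (Rule Atom))
    (I J : Atom → Grade) (h : isFuzzyAnswerSet I P) :
    isFuzzyModel I (fuzzyReduct P J) := by
  constructor
  · intro r hr hb
    exact h.1.1 r ⟨hr.1, hb⟩ hb
  · rintro a μ ⟨r, _, _, _, hle⟩
    exact hle

/-- Any two distinct fuzzy answer sets of a ground DFLP^FA program Π are
incomparable under the pointwise order. -/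
theorem fuzzy_answer_sets_incomparable {Atom : Type} (P : Set (Rule Atom))
    (I₁ I₂ : Atom → Grade) (h1 : isFuzzyAnswerSet I₁ P) (h2 : isFuzzyAnswerSet I₂ P)
    (hne : I₁ ≠ I₂) :
    ¬ I₁ ≤ I₂ ∧ ¬ I₂ ≤ I₁ := by
  constructor
  · intro hle
    exact h2.2 ⟨I₁, answerSet_model_of_any_reduct P I₁ I₂ h1, hle, hne⟩
  · intro hle
    exact h1.2 ⟨I₂, answerSet_model_of_any_reduct P I₂ I₁ h2, hle, hne.symm⟩
end

section
/- Let Π be a ground DLP^A program (a classical disjunctive logic program with classical aggregates) and let Π' be the corresponding DFLP₁^FA program obtained by annotating every head atom and every body atom of every rule with the fuzzy annotation 1, and by replacing every classical aggregate atom f{S} ≺ T by the fuzzy aggregate atom (f_F(S') ≺ T):1, where S' annotates each term of S and each atom in its conjunction with 1. Let I ⊆ B_L be a classical interpretation and define the fuzzy interpretation I' by I'(a) = 1 if a ∈ I and I'(b) = 0 if b ∈ B_L \ I. Then I' is a fuzzy answer set of Π' if and only if I is a classical answer set of Π. -/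
open scoped Classical

noncomputable section

/-- An element ⟨X | C⟩ of a classical ground aggregate set: a real term X and a
finite conjunction C of ground atoms. -/
structure CPair (Atom : Type) where
  term : ℝ
  conj : List Atom

/-- A classical ground aggregate set. -/
abbrev CSet (Atom : Type) := Finset (CPair Atom)

/-- A classical body element: an atom or a ground classical aggregate atom f{S} ≺ T. -/
inductive CBodyAtom (Atom : Type)
  | atom (a : Atom)
  | agg (f : AggFun) (S : CSet Atom) (op : CmpOp) (T : ℝ)

/-- A classical body literal (possibly negated). -/
structure CLit (Atom : Type) where
  neg : Bool
  batom : CBodyAtom Atom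

/-- A ground classical disjunctive rule. -/
structure CRule (Atom : Type) where
  head : List Atom
  body : List (CLit Atom)

/-- S_I : the multiset {{ X | ⟨X | C⟩ ∈ S and every atom of C is in I }}. -/
def cSetEval {Atom : Type} (I : Set Atom) (S : CSet Atom) : Multiset ℝ :=
  (S.val.filter (fun p => ∀ a ∈ p.conj, a ∈ I)).map CPair.term

/-- Evaluation of a classical aggregate; `none` means undefined. -/
def cAggEval : AggFun → Multiset ℝ → Option ℝ
  | .sumF, M => some M.sum
  | .timesF, M => some M.prod
  | .minF, M => if M = 0 then none else some (sInf {x | x ∈ M})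
  | .maxF, M => if M = 0 then none else some (sSup {x | x ∈ M})
  | .countF, M => some (Multiset.card M : ℝ)

def cSatBodyAtom {Atom : Type} (I : Set Atom) : CBodyAtom Atom → Prop
  | .atom a => a ∈ I
  | .agg f S op T => ∃ x, cAggEval f (cSetEval I S) = some x ∧ CmpOp.apply op x T

def cSatLit {Atom : Type} (I : Set Atom) (l : CLit Atom) : Prop :=
  if l.neg then ¬ cSatBodyAtom I l.batom else cSatBodyAtom I l.batom

def cSatBody {Atom : Type} (I : Set Atom) (r : CRule Atom) : Prop :=
  ∀ l ∈ r.body, cSatLit I l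

def cSatHead {Atom : Type} (I : Set Atom) (r : CRule Atom) : Prop :=
  ∃ a ∈ r.head, a ∈ I

def cSatRule {Atom : Type} (I : Set Atom) (r : CRule Atom) : Prop :=
  cSatBody I r → cSatHead I r

/-- I is a classical model of a program iff it satisfies all its rules. -/
def cModel {Atom : Type} (I : Set Atom) (P : Set (CRule Atom)) : Prop :=
  ∀ r ∈ P, cSatRule I r

/-- The DLP^A reduct Π^I = { r ∈ Π | I satisfies body(r) }. -/
def cReduct {Atom : Type} (P : Set (CRule Atom)) (I : Set Atom) : Set (CRule Atom) :=
  {r ∈ P | cSatBody I r}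

/-- I is a classical answer set of Π iff I is a ⊆-minimal classical model of Π^I. -/
def cAnswerSet {Atom : Type} (I : Set Atom) (P : Set (CRule Atom)) : Prop :=
  cModel I (cReduct P I) ∧ ¬ ∃ I' : Set Atom, cModel I' (cReduct P I) ∧ I' ⊂ I

/-- Translation: annotate a classical aggregate-set element with the fuzzy annotation 1. -/
def trPair {Atom : Type} (p : CPair Atom) : FuzzyPair Atom :=
  ⟨p.term, 1, p.conj.map (fun a => (a, 1))⟩

def trSet {Atom : Type} (S : CSet Atom) : GroundFuzzySet Atom := S.image trPair

def trBodyAtom {Atom : Type} : CBodyAtom Atom → BodyAtom Atom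
  | .atom a => .atom a
  | .agg f S op T => .agg f (trSet S) op T

def trLit {Atom : Type} (l : CLit Atom) : BodyLit Atom := ⟨l.neg, trBodyAtom l.batom, 1⟩

/-- Translation of a classical rule: annotate every head and body element with 1. -/
def trRule {Atom : Type} (r : CRule Atom) : Rule Atom :=
  ⟨r.head.map (fun a => (a, 1)), r.body.map trLit⟩

/-- The DFLP₁^FA program corresponding to a classical program. -/
def trProg {Atom : Type} (P : Set (CRule Atom)) : Set (Rule Atom) := trRule '' P

end

/-! All annotations of the translated program Π' are 1, so a fuzzy interpretation `J` satisfies a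
translated literal, aggregate or rule exactly when its 1-cut `{a | J a = 1}` classically satisfies
the original one. Hence the fuzzy models of Π' are the interpretations whose 1-cut is a classical
model of Π, and the fuzzy reduct w.r.t. `J` is the translation of the classical reduct w.r.t. the
1-cut. The crisp embedding of sets and the 1-cut form a Galois connection with
`oneCut ∘ crisp = id`, so fuzzy models strictly below `crisp I` and classical models strictly
inside `I` correspond. -/

section

variable {Atom : Type}

def oneCut (J : Atom → Grade) : Set Atom := {a | 1 ≤ J a}

@[simp] theorem mem_oneCut {J : Atom → Grade} {a : Atom} : a ∈ oneCut J ↔ 1 ≤ J a := Iff.rfl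

noncomputable def crisp (I : Set Atom) : Atom → Grade := fun a => if a ∈ I then 1 else 0

theorem gc_crisp_oneCut : GaloisConnection (crisp (Atom := Atom)) oneCut := by
  intro I J
  refine ⟨fun h a ha => ?_, fun h a => ?_⟩
  · simpa [crisp, ha] using h a
  · by_cases ha : a ∈ I
    · simpa [crisp, ha] using h ha
    · simp [crisp, ha]

theorem oneCut_crisp (I : Set Atom) : oneCut (crisp I) = I := by
  ext a
  by_cases ha : a ∈ I <;> simp [oneCut, crisp, ha]

theorem crisp_strictMono : StrictMono (crisp (Atom := Atom)) :=
  gc_crisp_oneCut.monotone_l.strictMono_of_injective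
    (Function.LeftInverse.injective oneCut_crisp)

theorem oneCut_ssubset_of_lt_crisp {J : Atom → Grade} {I : Set Atom} (h : J < crisp I) :
    oneCut J ⊂ I := by
  refine ((gc_crisp_oneCut.monotone_u h.le).trans_eq (oneCut_crisp I)).ssubset_of_ne ?_
  rintro rfl
  exact (gc_crisp_oneCut.l_u_le J).not_gt h

theorem trPair_injective : Function.Injective (trPair (Atom := Atom)) := by
  rintro ⟨x, C⟩ ⟨y, D⟩ h
  simp only [trPair, FuzzyPair.mk.injEq] at h
  obtain ⟨rfl, -, hCD⟩ := h
  rw [List.map_injective_iff.mpr (fun a b hab => congrArg Prod.fst hab) hCD]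

theorem fuzzySetEval_trSet (J : Atom → Grade) (S : CSet Atom) :
    fuzzySetEval J (trSet S) = (cSetEval (oneCut J) S).map (·, 1) := by
  have hconj (p : CPair Atom) :
      conjTrue J (trPair p).conj ↔ ∀ a ∈ p.conj, a ∈ oneCut J := by
    simp [conjTrue, trPair]
  rw [fuzzySetEval, trSet, Finset.image_val,
    Multiset.dedup_eq_self.mpr (S.nodup.map trPair_injective), Multiset.filter_map,
    cSetEval, Multiset.map_map, Multiset.map_map]
  exact congrArg _ (Multiset.filter_congr fun p _ => hconj p)

theorem minGrade_map_pair_one (N : Multiset ℝ) : minGrade (N.map (·, (1 : Grade))) = 1 := by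
  induction N using Multiset.induction_on <;> simp_all [minGrade]

theorem aggEval_map_pair_one (f : AggFun) (N : Multiset ℝ) :
    aggEval f (N.map (·, 1)) = (cAggEval f N).map (·, 1) := by
  cases f <;> simp [aggEval, cAggEval, minGrade_map_pair_one, Multiset.map_map] <;>
    split_ifs <;> simp

theorem satBodyAtom_trBodyAtom (J : Atom → Grade) (b : CBodyAtom Atom) :
    satBodyAtom J (trBodyAtom b) 1 ↔ cSatBodyAtom (oneCut J) b := by
  cases b with
  | atom a => rfl
  | agg f S op T =>
    simp only [trBodyAtom, satBodyAtom, cSatBodyAtom, fuzzySetEval_trSet, aggEval_map_pair_one]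
    cases cAggEval f (cSetEval (oneCut J) S) with
    | none => simp
    | some y =>
      simp only [Option.map_some, Option.some.injEq, Prod.mk.injEq]
      exact ⟨fun ⟨x, _, ⟨hx, _⟩, hop, _⟩ => ⟨x, hx, hop⟩,
        fun ⟨x, hx, hop⟩ => ⟨x, 1, ⟨hx, rfl⟩, hop, le_rfl⟩⟩

theorem satBody_trRule (J : Atom → Grade) (r : CRule Atom) :
    satBody J (trRule r) ↔ cSatBody (oneCut J) r := by
  have hlit (l : CLit Atom) : satLit J (trLit l) ↔ cSatLit (oneCut J) l := by
    cases l with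
    | mk neg b => cases neg <;> simp [satLit, cSatLit, trLit, satBodyAtom_trBodyAtom]
  simp [satBody, cSatBody, trRule, hlit]

theorem satRule_trRule (J : Atom → Grade) (r : CRule Atom) :
    satRule J (trRule r) ↔ cSatRule (oneCut J) r := by
  rw [satRule, cSatRule, satBody_trRule]
  simp [satHead, cSatHead, trRule]

theorem isFuzzyModel_trProg_iff (J : Atom → Grade) (Q : Set (CRule Atom)) :
    isFuzzyModel J (trProg Q) ↔ cModel (oneCut J) Q := by
  -- the head-support clause of `isFuzzyModel` assumes its own conclusion `μ ≤ J a`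
  simp [isFuzzyModel, cModel, trProg, satRule_trRule]

theorem fuzzyReduct_trProg (P : Set (CRule Atom)) (J : Atom → Grade) :
    fuzzyReduct (trProg P) J = trProg (cReduct P (oneCut J)) := by
  ext r
  simp only [fuzzyReduct, cReduct, trProg, Set.mem_ofPred_eq, Set.mem_image]
  grind [satBody_trRule]

theorem isMinimalFuzzyModel_crisp_trProg_iff (I : Set Atom) (Q : Set (CRule Atom)) :
    isMinimalFuzzyModel (crisp I) (trProg Q) ↔
      cModel I Q ∧ ¬ ∃ I' : Set Atom, cModel I' Q ∧ I' ⊂ I := by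
  simp only [isMinimalFuzzyModel, isFuzzyModel_trProg_iff, oneCut_crisp, ← lt_iff_le_and_ne]
  refine and_congr_right fun _ => not_congr ⟨?_, ?_⟩
  · rintro ⟨J, hJ, hlt⟩
    exact ⟨oneCut J, hJ, oneCut_ssubset_of_lt_crisp hlt⟩
  · rintro ⟨I', hI', hsub⟩
    exact ⟨crisp I', by rwa [oneCut_crisp], crisp_strictMono hsub⟩

end

/-- Let Π be a ground DLP^A program and Π' its DFLP₁^FA translation (every atom
and aggregate annotated with 1). Let I ⊆ B_L be a classical interpretation, and I' the fuzzy
interpretation with I'(a) = 1 if a ∈ I and I'(a) = 0 otherwise. Then I' is a fuzzy answer set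
of Π' iff I is a classical answer set of Π. -/
theorem fuzzy_answer_set_iff_classical_answer_set_DLPA {Atom : Type}
    (P : Set (CRule Atom)) (I : Set Atom) (I' : Atom → Grade)
    (hI' : ∀ a, I' a = if a ∈ I then 1 else 0) :
    isFuzzyAnswerSet I' (trProg P) ↔ cAnswerSet I P := by
  obtain rfl : I' = crisp I := funext hI'
  rw [isFuzzyAnswerSet, fuzzyReduct_trProg, oneCut_crisp]
  exact isMinimalFuzzyModel_crisp_trProg_iff I _
end

section
/- Let Π be the ground DFLP^FA program consisting of the rules: (r1) a(1,1):0.8 ∨ a(1,2):0.4 ← ; (r2) a(2,1):0.3 ∨ a(2,2):0.9 ← ; (r3) Γ:1 ← not Γ:1, (min_F(S) ≤ 1):0.4, where Γ is an atom distinct from all a(i,j) and S = { ⟨1:0.8 | a(1,1):0.8⟩, ⟨2:0.4 | a(1,2):0.4⟩, ⟨1:0.3 | a(2,1):0.3⟩, ⟨2:0.9 | a(2,2):0.9⟩ }. Then Π has exactly three fuzzy answer sets: I₁ with I₁(a(1,1)) = 0.8, I₁(a(2,1)) = 0.3 and value 0 on all other atoms; I₂ with I₂(a(1,2)) = 0.4,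 I₂(a(2,1)) = 0.3 and value 0 on all other atoms; and I₃ with I₃(a(1,2)) = 0.4, I₃(a(2,2)) = 0.9 and value 0 on all other atoms. -/
open scoped Classical

noncomputable section

def gr03 : Grade := ⟨0.3, Set.mem_Icc.mpr ⟨by norm_num, by norm_num⟩⟩
def gr04 : Grade := ⟨0.4, Set.mem_Icc.mpr ⟨by norm_num, by norm_num⟩⟩
def gr08 : Grade := ⟨0.8, Set.mem_Icc.mpr ⟨by norm_num, by norm_num⟩⟩
def gr09 : Grade := ⟨0.9, Set.mem_Icc.mpr ⟨by norm_num, by norm_num⟩⟩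

/-- The ground fuzzy set
S = { ⟨1:0.8 | a(1,1):0.8⟩, ⟨2:0.4 | a(1,2):0.4⟩, ⟨1:0.3 | a(2,1):0.3⟩, ⟨2:0.9 | a(2,2):0.9⟩ }. -/
def exS {Atom : Type} (a : ℕ → ℕ → Atom) : GroundFuzzySet Atom :=
  { ⟨1, gr08, [(a 1 1, gr08)]⟩, ⟨2, gr04, [(a 1 2, gr04)]⟩,
    ⟨1, gr03, [(a 2 1, gr03)]⟩, ⟨2, gr09, [(a 2 2, gr09)]⟩ }

end

noncomputable section

/-- (r1)  a(1,1):0.8 ∨ a(1,2):0.4 ← . -/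
def exRule1 {Atom : Type} (a : ℕ → ℕ → Atom) : Rule Atom :=
  ⟨[(a 1 1, gr08), (a 1 2, gr04)], []⟩

/-- (r2)  a(2,1):0.3 ∨ a(2,2):0.9 ← . -/
def exRule2 {Atom : Type} (a : ℕ → ℕ → Atom) : Rule Atom :=
  ⟨[(a 2 1, gr03), (a 2 2, gr09)], []⟩

/-- (r3)  Γ:1 ← not Γ:1, (min_F(S) ≤ 1):0.4. -/
def exRule3 {Atom : Type} (a : ℕ → ℕ → Atom) (Γ : Atom) : Rule Atom :=
  ⟨[(Γ, 1)],
   [⟨true, BodyAtom.atom Γ, 1⟩,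
    ⟨false, BodyAtom.agg AggFun.minF (exS a) CmpOp.le 1, gr04⟩]⟩

/-- The program Π = {r1, r2, r3}. -/
def exProg {Atom : Type} (a : ℕ → ℕ → Atom) (Γ : Atom) : Set (Rule Atom) :=
  {exRule1 a, exRule2 a, exRule3 a Γ}

/-- I₁ : a(1,1) ↦ 0.8, a(2,1) ↦ 0.3, all other atoms ↦ 0. -/
def exI1 {Atom : Type} (a : ℕ → ℕ → Atom) : Atom → Grade :=
  fun b => if b = a 1 1 then gr08 else if b = a 2 1 then gr03 else 0

/-- I₂ : a(1,2) ↦ 0.4, a(2,1) ↦ 0.3, all other atoms ↦ 0. -/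
def exI2 {Atom : Type} (a : ℕ → ℕ → Atom) : Atom → Grade :=
  fun b => if b = a 1 2 then gr04 else if b = a 2 1 then gr03 else 0

/-- I₃ : a(1,2) ↦ 0.4, a(2,2) ↦ 0.9, all other atoms ↦ 0. -/
def exI3 {Atom : Type} (a : ℕ → ℕ → Atom) : Atom → Grade :=
  fun b => if b = a 1 2 then gr04 else if b = a 2 2 then gr09 else 0

/-- I' : a(1,1) ↦ 0.8, a(2,2) ↦ 0.9, all other atoms ↦ 0. -/
def exI' {Atom : Type} (a : ℕ → ℕ → Atom) : Atom → Grade :=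
  fun b => if b = a 1 1 then gr08 else if b = a 2 2 then gr09 else 0

end

/-! Rule r3 is a constraint: if an answer set satisfied its body, r3 would lie in the reduct and
force Γ:1, contradicting the literal `not Γ:1`. Evaluating min_F, the body of r3 holds exactly when
Γ < 1, a(1,1) ≥ 0.8 and a(2,1) < 0.3. So the reduct of an answer set is {r1, r2}, whose minimal
models are the four interpretations choosing one disjunct from each head; the choice of a(1,1) and
a(2,2) satisfies the body of r3 and is discarded, leaving I₁, I₂, I₃. -/

lemma List.nodup_four_iff {α : Type*} {a b c d : α} :
    [a, b, c, d].Nodup ↔ (a ≠ b ∧ a ≠ c ∧ a ≠ d) ∧ (b ≠ c ∧ b ≠ d) ∧ c ≠ d := by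
  simp only [List.nodup_cons, List.mem_cons, List.not_mem_nil, or_false, not_or,
    List.nodup_nil, and_true, not_false_eq_true, ne_eq]

section

variable {Atom : Type}

lemma le_minGrade_iff {M : Multiset (ℝ × Grade)} {μ : Grade} :
    μ ≤ minGrade M ↔ ∀ q ∈ M, μ ≤ q.2 := by
  induction M using Multiset.induction_on with
  | empty => simp [minGrade, unitInterval.le_one']
  | cons q M ih => simp_all [minGrade]

lemma mem_fuzzySetEval {I : Atom → Grade} {S : GroundFuzzySet Atom} {q : ℝ × Grade} :
    q ∈ fuzzySetEval I S ↔ ∃ p ∈ S, conjTrue I p.conj ∧ (p.term, p.grade) = q := by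
  simp [fuzzySetEval, and_assoc]

lemma satBodyAtom_minF_le_iff (I : Atom → Grade) (S : GroundFuzzySet Atom) (T : ℝ) (μ : Grade) :
    satBodyAtom I (.agg .minF S .le T) μ ↔
      (∃ q ∈ fuzzySetEval I S, q.1 ≤ T) ∧ ∀ q ∈ fuzzySetEval I S, μ ≤ q.2 := by
  set M := fuzzySetEval I S
  have hfin : {x | x ∈ M.map Prod.fst}.Finite := (M.map Prod.fst).finite_toSet
  simp only [satBodyAtom, aggEval, CmpOp.apply, ← le_minGrade_iff]
  constructor
  · rintro ⟨x, ν, heq, hxT, hμν⟩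
    split_ifs at heq with hM
    obtain ⟨rfl, rfl⟩ := Prod.mk.inj (Option.some.inj heq)
    obtain ⟨q, hqM⟩ := Multiset.exists_mem_of_ne_zero hM
    obtain ⟨q', hqM', hq'⟩ := Multiset.mem_map.mp
      (Set.Nonempty.csInf_mem ⟨q.1, Multiset.mem_map_of_mem _ hqM⟩ hfin)
    exact ⟨⟨q', hqM', hq' ▸ hxT⟩, hμν⟩
  · rintro ⟨⟨q, hqM, hqT⟩, hμ⟩
    have hM : M ≠ 0 := fun h => by simp [h] at hqM
    exact ⟨_, _, if_neg hM, (csInf_le hfin.bddBelow (Multiset.mem_map_of_mem _ hqM)).trans hqT, hμ⟩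

-- The second clause of `isFuzzyModel` is implied by its own hypothesis.
lemma isFuzzyModel_iff {I : Atom → Grade} {P : Set (Rule Atom)} :
    isFuzzyModel I P ↔ ∀ r ∈ P, satRule I r :=
  and_iff_left fun _ _ ⟨_, _, _, _, h⟩ => h

lemma isMinimalFuzzyModel_iff_minimal {I : Atom → Grade} {P : Set (Rule Atom)} :
    isMinimalFuzzyModel I P ↔ Minimal (isFuzzyModel · P) I := by
  simp only [isMinimalFuzzyModel, minimal_iff, not_exists, not_and, not_not, eq_comm (a := I)]

lemma not_satBody_of_isFuzzyAnswerSet {I : Atom → Grade} {P : Set (Rule Atom)} {r : Rule Atom}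
    {b : Atom} {μ : Grade} (hr : r ∈ P) (hhead : r.head = [(b, μ)])
    (hneg : ⟨true, .atom b, μ⟩ ∈ r.body) (hI : isFuzzyAnswerSet I P) : ¬ satBody I r := by
  intro hbody
  obtain ⟨h, hh, hle⟩ := hI.1.1 r ⟨hr, hbody⟩ hbody
  rw [hhead, List.mem_singleton] at hh
  subst hh
  exact hbody _ hneg hle

section TwoPoint

variable {u v x y x' y' b : Atom} {g h g' h' μ : Grade} {J : Atom → Grade}

-- `exI1`, `exI2`, `exI3` and `exI'` are all of this form.
noncomputable def twoPoint (u v : Atom) (g h : Grade) : Atom → Grade :=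
  fun b => if b = u then g else if b = v then h else 0

lemma twoPoint_apply_left : twoPoint u v g h u = g := if_pos rfl

lemma twoPoint_apply_right (hvu : v ≠ u) : twoPoint u v g h v = h := by
  simp [twoPoint, hvu]

lemma twoPoint_apply_of_ne (hu : b ≠ u) (hv : b ≠ v) : twoPoint u v g h b = 0 := by
  simp [twoPoint, hu, hv]

lemma twoPoint_lt_one (hg : g < 1) (hh : h < 1) : twoPoint u v g h b < 1 := by
  unfold twoPoint
  split_ifs
  exacts [hg, hh, zero_lt_one]

lemma twoPoint_le (hu : g ≤ J u) (hv : h ≤ J v) : twoPoint u v g h ≤ J := by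
  intro b
  unfold twoPoint
  split_ifs with hbu hbv
  · exact hbu ▸ hu
  · exact hbv ▸ hv
  · exact unitInterval.nonneg'

lemma not_le_apply_of_le_twoPoint (hle : J ≤ twoPoint u v g h) (hu : b ≠ u) (hv : b ≠ v)
    (hμ : 0 < μ) : ¬ μ ≤ J b := fun hμJ =>
  (hμ.trans_le (hμJ.trans ((hle b).trans_eq (twoPoint_apply_of_ne hu hv)))).false

lemma minimal_twoPoint (hyx : y ≠ x) (hx' : x' ≠ x ∧ x' ≠ y) (hy' : y' ≠ x ∧ y' ≠ y)
    (hg' : 0 < g') (hh' : 0 < h') :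
    Minimal (fun J => (g ≤ J x ∨ g' ≤ J x') ∧ (h ≤ J y ∨ h' ≤ J y')) (twoPoint x y g h) := by
  refine ⟨⟨Or.inl twoPoint_apply_left.ge, Or.inl (twoPoint_apply_right hyx).ge⟩, ?_⟩
  rintro J ⟨hJx, hJy⟩ hle
  exact twoPoint_le (hJx.resolve_right (not_le_apply_of_le_twoPoint hle hx'.1 hx'.2 hg'))
    (hJy.resolve_right (not_le_apply_of_le_twoPoint hle hy'.1 hy'.2 hh'))

lemma Minimal.eq_twoPoint {P : (Atom → Grade) → Prop} {I : Atom → Grade} (hI : Minimal P I)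
    (hP : P (twoPoint u v g h)) (hu : g ≤ I u) (hv : h ≤ I v) : I = twoPoint u v g h :=
  (hI.eq_of_le hP (twoPoint_le hu hv)).symm

theorem minimal_twoChoices_iff {u₁ v₁ u₂ v₂ : Atom} {g₁ h₁ g₂ h₂ : Grade} {I : Atom → Grade}
    (hnd : [u₁, v₁, u₂, v₂].Nodup) (hg₁ : 0 < g₁) (hh₁ : 0 < h₁) (hg₂ : 0 < g₂) (hh₂ : 0 < h₂) :
    Minimal (fun J => (g₁ ≤ J u₁ ∨ h₁ ≤ J v₁) ∧ (g₂ ≤ J u₂ ∨ h₂ ≤ J v₂)) I ↔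
      I = twoPoint u₁ u₂ g₁ g₂ ∨ I = twoPoint u₁ v₂ g₁ h₂ ∨
        I = twoPoint v₁ u₂ h₁ g₂ ∨ I = twoPoint v₁ v₂ h₁ h₂ := by
  obtain ⟨⟨h₁₂, h₁₃, h₁₄⟩, ⟨h₂₃, h₂₄⟩, h₃₄⟩ := List.nodup_four_iff.1 hnd
  set P : (Atom → Grade) → Prop := fun J => (g₁ ≤ J u₁ ∨ h₁ ≤ J v₁) ∧ (g₂ ≤ J u₂ ∨ h₂ ≤ J v₂)
  have m₁ : Minimal P (twoPoint u₁ u₂ g₁ g₂) :=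
    minimal_twoPoint (Ne.symm h₁₃) ⟨Ne.symm h₁₂, h₂₃⟩ ⟨Ne.symm h₁₄, Ne.symm h₃₄⟩ hh₁ hh₂
  have m₂ : Minimal P (twoPoint u₁ v₂ g₁ h₂) := by
    simpa only [P, or_comm] using minimal_twoPoint (g := g₁) (h := h₂)
      (Ne.symm h₁₄) ⟨Ne.symm h₁₂, h₂₄⟩ ⟨Ne.symm h₁₃, h₃₄⟩ hh₁ hg₂
  have m₃ : Minimal P (twoPoint v₁ u₂ h₁ g₂) := by
    simpa only [P, or_comm] using minimal_twoPoint (g := h₁) (h := g₂)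
      (Ne.symm h₂₃) ⟨h₁₂, h₁₃⟩ ⟨Ne.symm h₂₄, Ne.symm h₃₄⟩ hg₁ hh₂
  have m₄ : Minimal P (twoPoint v₁ v₂ h₁ h₂) := by
    simpa only [P, or_comm] using minimal_twoPoint (g := h₁) (h := h₂)
      (Ne.symm h₂₄) ⟨h₁₂, h₁₄⟩ ⟨Ne.symm h₂₃, h₃₄⟩ hg₁ hg₂
  constructor
  · intro hI
    obtain ⟨hu₁ | hv₁, hu₂ | hv₂⟩ := hI.prop
    · exact Or.inl (hI.eq_twoPoint m₁.prop hu₁ hu₂)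
    · exact Or.inr (Or.inl (hI.eq_twoPoint m₂.prop hu₁ hv₂))
    · exact Or.inr (Or.inr (Or.inl (hI.eq_twoPoint m₃.prop hv₁ hu₂)))
    · exact Or.inr (Or.inr (Or.inr (hI.eq_twoPoint m₄.prop hv₁ hv₂)))
  · rintro (rfl | rfl | rfl | rfl)
    exacts [m₁, m₂, m₃, m₄]

end TwoPoint

lemma gr03_pos : 0 < gr03 := by rw [← Subtype.coe_lt_coe]; norm_num [gr03]
lemma gr04_pos : 0 < gr04 := by rw [← Subtype.coe_lt_coe]; norm_num [gr04]
lemma gr08_pos : 0 < gr08 := by rw [← Subtype.coe_lt_coe]; norm_num [gr08]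
lemma gr09_pos : 0 < gr09 := by rw [← Subtype.coe_lt_coe]; norm_num [gr09]
lemma gr08_lt_one : gr08 < 1 := by rw [← Subtype.coe_lt_coe]; norm_num [gr08]
lemma gr09_lt_one : gr09 < 1 := by rw [← Subtype.coe_lt_coe]; norm_num [gr09]

lemma mem_fuzzySetEval_exS (a : ℕ → ℕ → Atom) (I : Atom → Grade) (q : ℝ × Grade) :
    q ∈ fuzzySetEval I (exS a) ↔
      (gr08 ≤ I (a 1 1) ∧ q = (1, gr08)) ∨ (gr04 ≤ I (a 1 2) ∧ q = (2, gr04)) ∨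
      (gr03 ≤ I (a 2 1) ∧ q = (1, gr03)) ∨ (gr09 ≤ I (a 2 2) ∧ q = (2, gr09)) := by
  simp only [mem_fuzzySetEval, exS, Finset.mem_insert, Finset.mem_singleton, or_and_right,
    exists_or, exists_eq_left, conjTrue, List.mem_singleton, forall_eq, eq_comm]

lemma satBody_exRule3_iff (a : ℕ → ℕ → Atom) (Γ : Atom) (I : Atom → Grade) :
    satBody I (exRule3 a Γ) ↔ ¬ 1 ≤ I Γ ∧ gr08 ≤ I (a 1 1) ∧ ¬ gr03 ≤ I (a 2 1) := by
  have h₄₈ : gr04 ≤ gr08 := by rw [← Subtype.coe_le_coe]; norm_num [gr04, gr08]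
  have h₄₉ : gr04 ≤ gr09 := by rw [← Subtype.coe_le_coe]; norm_num [gr04, gr09]
  have h₄₃ : ¬ gr04 ≤ gr03 := by rw [← Subtype.coe_le_coe]; norm_num [gr04, gr03]
  simp only [satBody, exRule3, List.mem_cons, List.not_mem_nil, or_false, forall_eq_or_imp,
    forall_eq, satLit, if_true, Bool.false_eq_true, if_false, satBodyAtom_minF_le_iff]
  simp [satBodyAtom, mem_fuzzySetEval_exS, or_and_right, exists_or, or_imp, forall_and,
    h₄₈, h₄₉, h₄₃]

lemma fuzzyReduct_exProg {a : ℕ → ℕ → Atom} {Γ : Atom} {I : Atom → Grade}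
    (h : ¬ satBody I (exRule3 a Γ)) : fuzzyReduct (exProg a Γ) I = {exRule1 a, exRule2 a} := by
  ext r
  simp only [fuzzyReduct, exProg, Set.mem_insert_iff, Set.mem_singleton_iff]
  constructor
  · rintro ⟨rfl | rfl | rfl, hr⟩
    exacts [Or.inl rfl, Or.inr rfl, absurd hr h]
  · rintro (rfl | rfl) <;> simp [satBody, exRule1, exRule2]

lemma isFuzzyModel_exRule1_exRule2_iff {a : ℕ → ℕ → Atom} {J : Atom → Grade} :
    isFuzzyModel J {exRule1 a, exRule2 a} ↔
      (gr08 ≤ J (a 1 1) ∨ gr04 ≤ J (a 1 2)) ∧ (gr03 ≤ J (a 2 1) ∨ gr09 ≤ J (a 2 2)) := by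
  simp only [isFuzzyModel_iff, Set.mem_insert_iff, Set.mem_singleton_iff, forall_eq_or_imp,
    forall_eq, satRule, satBody, satHead, exRule1, exRule2, List.mem_cons, List.not_mem_nil, or_false,
    exists_eq_or_imp, existsAndEq, true_and, IsEmpty.forall_iff, implies_true, true_implies]

lemma isFuzzyAnswerSet_exProg_iff {a : ℕ → ℕ → Atom} {Γ : Atom} {I : Atom → Grade} :
    isFuzzyAnswerSet I (exProg a Γ) ↔ ¬ satBody I (exRule3 a Γ) ∧
      Minimal (fun J : Atom → Grade =>
        (gr08 ≤ J (a 1 1) ∨ gr04 ≤ J (a 1 2)) ∧ (gr03 ≤ J (a 2 1) ∨ gr09 ≤ J (a 2 2))) I := by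
  by_cases h₃ : satBody I (exRule3 a Γ)
  · exact iff_of_false
      (fun hI => not_satBody_of_isFuzzyAnswerSet (by simp [exProg]) rfl List.mem_cons_self hI h₃)
      (fun h => h.1 h₃)
  · simp only [isFuzzyAnswerSet, fuzzyReduct_exProg h₃, isMinimalFuzzyModel_iff_minimal,
      isFuzzyModel_exRule1_exRule2_iff, h₃, not_false_eq_true, true_and]

lemma nodup_of_injOn {a : ℕ → ℕ → Atom}
    (hdist : Set.InjOn (fun p : ℕ × ℕ => a p.1 p.2) (({1, 2} : Set ℕ) ×ˢ ({1, 2} : Set ℕ))) :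
    [a 1 1, a 1 2, a 2 1, a 2 2].Nodup := by
  have hne {i j k l : ℕ} (hi : i ∈ ({1, 2} : Set ℕ)) (hj : j ∈ ({1, 2} : Set ℕ))
      (hk : k ∈ ({1, 2} : Set ℕ)) (hl : l ∈ ({1, 2} : Set ℕ)) (h : (i, j) ≠ (k, l)) :
      a i j ≠ a k l :=
    hdist.ne (Set.mk_mem_prod hi hj) (Set.mk_mem_prod hk hl) h
  rw [List.nodup_four_iff]
  refine ⟨⟨hne ?_ ?_ ?_ ?_ ?_, hne ?_ ?_ ?_ ?_ ?_, hne ?_ ?_ ?_ ?_ ?_⟩,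
    ⟨hne ?_ ?_ ?_ ?_ ?_, hne ?_ ?_ ?_ ?_ ?_⟩, hne ?_ ?_ ?_ ?_ ?_⟩ <;> simp

end

theorem example_program_has_exactly_three_fuzzy_answer_sets_general {Atom : Type}
    (a : ℕ → ℕ → Atom) (Γ : Atom)
    (hdist : Set.InjOn (fun p : ℕ × ℕ => a p.1 p.2) (({1, 2} : Set ℕ) ×ˢ ({1, 2} : Set ℕ)))
    (I : Atom → Grade) :
    isFuzzyAnswerSet I (exProg a Γ) ↔ (I = exI1 a ∨ I = exI2 a ∨ I = exI3 a) := by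
  have hnd := nodup_of_injOn hdist
  obtain ⟨⟨h₁₂, h₁₃, h₁₄⟩, -, h₃₄⟩ := List.nodup_four_iff.1 hnd
  rw [isFuzzyAnswerSet_exProg_iff, satBody_exRule3_iff,
    minimal_twoChoices_iff hnd gr08_pos gr04_pos gr03_pos gr09_pos]
  constructor
  · rintro ⟨h₃, rfl | rfl | rfl | rfl⟩
    · exact Or.inl rfl
    · exact absurd ⟨(twoPoint_lt_one gr08_lt_one gr09_lt_one).not_ge, twoPoint_apply_left.ge,
        not_le_apply_of_le_twoPoint le_rfl (Ne.symm h₁₃) h₃₄ gr03_pos⟩ h₃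
    · exact Or.inr (Or.inl rfl)
    · exact Or.inr (Or.inr rfl)
  · rintro (rfl | rfl | rfl)
    · exact ⟨fun h => h.2.2 (twoPoint_apply_right (Ne.symm h₁₃)).ge, Or.inl rfl⟩
    · exact ⟨fun h => not_le_apply_of_le_twoPoint le_rfl h₁₂ h₁₃ gr08_pos h.2.1,
        Or.inr (Or.inr (Or.inl rfl))⟩
    · exact ⟨fun h => not_le_apply_of_le_twoPoint le_rfl h₁₂ h₁₄ gr08_pos h.2.1,
        Or.inr (Or.inr (Or.inr rfl))⟩

/-- The program Π = {r1, r2, r3} has exactly the three fuzzy answer sets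
I₁, I₂, I₃ described above. -/
theorem example_program_has_exactly_three_fuzzy_answer_sets {Atom : Type}
    (a : ℕ → ℕ → Atom) (Γ : Atom)
    (hdist : Set.InjOn (fun p : ℕ × ℕ => a p.1 p.2) (({1, 2} : Set ℕ) ×ˢ ({1, 2} : Set ℕ)))
    (hΓ : ∀ i ∈ ({1, 2} : Set ℕ), ∀ j ∈ ({1, 2} : Set ℕ), Γ ≠ a i j)
    (I : Atom → Grade) :
    isFuzzyAnswerSet I (exProg a Γ) ↔ (I = exI1 a ∨ I = exI2 a ∨ I = exI3 a) :=
  example_program_has_exactly_three_fuzzy_answer_sets_general a Γ hdist I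
end
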